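/- For every R with 0 < R < (1/2)·√(3/(8π)), the map T sends the set C_R^0 into itself; that is, if (m̃,ρ̃) ∈ C_R^0 then T[m̃,ρ̃] ∈ C_R^0. -/

import Mathlib

open Real Set

noncomputable section

/-- `ρ₀(R) = (16π/3)R²`. -/
def rho0R (R : ℝ) : ℝ := 16 * π / 3 * R ^ 2

/-- Membership in the set `C_R^0`. -/
def memC (R : ℝ) (m ρ : ℝ → ℝ) : Prop :=
  ContinuousOn m (Icc 0 R) ∧ ContinuousOn ρ (Icc 0 R) ∧
  ∀ r ∈ Icc (0:ℝ) R,
    0 ≤ m r ∧ m r ≤ 4 * π / 3 * rho0R R * r ^ 3 ∧ 0 ≤ ρ r ∧ ρ r ≤ rho0R R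

/-- `M[ρ̃](r) = ∫₀^r 4πs²ρ̃(s) ds`. -/
def Mop (ρ : ℝ → ℝ) (r : ℝ) : ℝ := ∫ s in (0:ℝ)..r, 4 * π * s ^ 2 * ρ s

/-- `P[m̃,ρ̃](r)`. -/
def Pop (R : ℝ) (m ρ : ℝ → ℝ) (r : ℝ) : ℝ :=
  ∫ s in r..R, (1 + 2 * ρ s) / (1 - 8 * π / 3 * s ^ 2 - 2 * m s / s) *
    (4 * π * s / 3) * (1 + 3 * ρ s + 3 * m s / (4 * π * s ^ 3))

/-! Set `x = ρ₀(R)`, so that `8πR²/3 = x/2` and the hypothesis on `R` reads `x < 1/2`.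
`M` is handled by integrating `4πs²ρ̃ ≤ 4πs²x`. For `P`, the bounds on `(m̃, ρ̃)` give
`1 - 8πs²/3 - 2m̃/s ≥ 1 - a s²` with `a = 8π(1 + x)/3`, where `aR² = x(1 + x)/2 ≤ 3/8`,
and `1 + 3ρ̃ + 3m̃/(4πs³) ≤ 1 + 4x`. Bounding `1/(1 - t)` by its chord over `t ∈ [0, aR²]`
makes the integrand at most an odd cubic in `s`, whose integral over `[0, R]` is
`x(1 + 2x)(1 + 4x)(4 - x - x²) / (16(2 - x - x²)) ≤ x` for `0 ≤ x ≤ 1/2`. -/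

open MeasureTheory

lemma one_div_one_sub_le_one_add_div {t u : ℝ} (ht : 0 ≤ t) (htu : t ≤ u) (hu : u < 1) :
    1 / (1 - t) ≤ 1 + t / (1 - u) := by
  have h : 1 / (1 - t) = 1 + t / (1 - t) := by field_simp [(by linarith : 1 - t ≠ 0)]; ring
  rw [h]
  gcongr

lemma integrableOn_Icc_of_continuousOn_Ioc_of_norm_le {E : Type*} [NormedAddCommGroup E]
    {f : ℝ → E} {a b C : ℝ} (hf : ContinuousOn f (Ioc a b)) (hC : ∀ s ∈ Ioc a b, ‖f s‖ ≤ C) :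
    IntegrableOn f (Icc a b) := by
  rw [integrableOn_Icc_iff_integrableOn_Ioc]
  refine (integrableOn_const (C := C) measure_Ioc_lt_top.ne).mono'
    (hf.aestronglyMeasurable measurableSet_Ioc) ?_
  exact (ae_restrict_iff' measurableSet_Ioc).mpr (ae_of_all _ hC)

lemma rho0R_nonneg (R : ℝ) : 0 ≤ rho0R R := by
  unfold rho0R; positivity

lemma rho0R_lt_half {R : ℝ} (hR : 0 < R) (hRlt : R < 1 / 2 * √(3 / (8 * π))) :
    rho0R R < 1 / 2 := by
  have hsq : R ^ 2 < 1 / 4 * (3 / (8 * π)) := by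
    calc R ^ 2 < (1 / 2 * √(3 / (8 * π))) ^ 2 := pow_lt_pow_left₀ hRlt hR.le two_ne_zero
      _ = 1 / 4 * (3 / (8 * π)) := by rw [mul_pow, sq_sqrt (by positivity)]; norm_num
  have : 16 * π / 3 * R ^ 2 < 16 * π / 3 * (1 / 4 * (3 / (8 * π))) :=
    mul_lt_mul_of_pos_left hsq (by positivity)
  unfold rho0R
  convert this using 1
  field_simp
  norm_num

lemma one_sub_mul_sq_eq_rho0R (R : ℝ) :
    1 - 8 * π / 3 * (1 + rho0R R) * R ^ 2 = (2 - rho0R R - rho0R R ^ 2) / 2 := by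
  unfold rho0R; ring

lemma mul_sq_lt_one_of_rho0R_le {R : ℝ} (hx : rho0R R ≤ 1 / 2) :
    8 * π / 3 * (1 + rho0R R) * R ^ 2 < 1 := by
  have := one_sub_mul_sq_eq_rho0R R
  nlinarith [rho0R_nonneg R]

section Mop

variable {ρ : ℝ → ℝ}

lemma continuousOn_Mop {R : ℝ} (hR : 0 ≤ R) (hρ : ContinuousOn ρ (Icc 0 R)) :
    ContinuousOn (Mop ρ) (Icc 0 R) := by
  have h : IntegrableOn (fun s => 4 * π * s ^ 2 * ρ s) (uIcc 0 R) := by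
    rw [uIcc_of_le hR]
    exact ((continuousOn_const.mul (continuousOn_pow 2)).mul hρ).integrableOn_Icc
  have := intervalIntegral.continuousOn_primitive_interval h
  rwa [uIcc_of_le hR] at this

lemma Mop_nonneg {r : ℝ} (hr : 0 ≤ r) (hρ : ∀ s ∈ Icc 0 r, 0 ≤ ρ s) : 0 ≤ Mop ρ r :=
  intervalIntegral.integral_nonneg hr fun s hs => by have := hρ s hs; positivity

lemma Mop_le {r c : ℝ} (hr : 0 ≤ r) (hρc : ContinuousOn ρ (Icc 0 r))
    (hρ : ∀ s ∈ Icc 0 r, ρ s ≤ c) : Mop ρ r ≤ 4 * π / 3 * c * r ^ 3 := by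
  calc Mop ρ r ≤ ∫ s in (0:ℝ)..r, 4 * π * c * s ^ 2 := by
        refine intervalIntegral.integral_mono_on hr ?_
          ((by fun_prop : Continuous fun s : ℝ => 4 * π * c * s ^ 2).intervalIntegrable _ _)
          fun s hs => ?_
        · refine ContinuousOn.intervalIntegrable ?_
          rw [uIcc_of_le hr]
          exact (continuousOn_const.mul (continuousOn_pow 2)).mul hρc
        · have := hρ s hs
          rw [mul_right_comm]
          gcongr
    _ = 4 * π / 3 * c * r ^ 3 := by
        rw [intervalIntegral.integral_const_mul, integral_pow]
        ring

end Mop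

def pDenom (s μ : ℝ) : ℝ := 1 - 8 * π / 3 * s ^ 2 - 2 * μ / s

def pIntegrand (s μ ϱ : ℝ) : ℝ :=
  (1 + 2 * ϱ) / pDenom s μ * (4 * π * s / 3) * (1 + 3 * ϱ + 3 * μ / (4 * π * s ^ 3))

/-- The chord of `t ↦ 1/(1 - t)` over `[0, 8π(1 + x)R²/3]` replaces `1/pDenom` here; the cruder
bound `1/pDenom ≤ 1/(1 - 8π(1 + x)R²/3)` does not give `P ≤ x` when `x` is close to `1/2`. -/
def pMajorant (x R s : ℝ) : ℝ :=
  (1 + 2 * x) * (1 + 4 * x) * (4 * π / 3) *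
    (s + 8 * π / 3 * (1 + x) * s ^ 3 / (1 - 8 * π / 3 * (1 + x) * R ^ 2))

section pIntegrand

variable {x s μ ϱ : ℝ}

lemma one_sub_le_pDenom (hs : 0 < s) (hμ : μ ≤ 4 * π / 3 * x * s ^ 3) :
    1 - 8 * π / 3 * (1 + x) * s ^ 2 ≤ pDenom s μ := by
  have : 2 * μ / s ≤ 8 * π / 3 * x * s ^ 2 := by
    rw [div_le_iff₀ hs]; nlinarith
  unfold pDenom
  nlinarith

lemma pIntegrand_nonneg (hs : 0 ≤ s) (hμ : 0 ≤ μ) (hϱ : 0 ≤ ϱ) (hD : 0 ≤ pDenom s μ) :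
    0 ≤ pIntegrand s μ ϱ := by
  unfold pIntegrand
  have := div_nonneg (by positivity : (0:ℝ) ≤ 1 + 2 * ϱ) hD
  positivity

lemma pIntegrand_le (hs : 0 < s) (hμ0 : 0 ≤ μ) (hμ : μ ≤ 4 * π / 3 * x * s ^ 3)
    (hϱ0 : 0 ≤ ϱ) (hϱ : ϱ ≤ x) (hD : 8 * π / 3 * (1 + x) * s ^ 2 < 1) :
    pIntegrand s μ ϱ ≤
      (1 + 2 * x) / (1 - 8 * π / 3 * (1 + x) * s ^ 2) * (4 * π * s / 3) * (1 + 3 * x + x) := by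
  -- `1 + 3 * x + x` rather than `1 + 4 * x`, so that `gcongr` matches the last factor termwise
  have hmass : 3 * μ / (4 * π * s ^ 3) ≤ x := by
    rw [div_le_iff₀ (by positivity)]; linarith
  have hx : 0 ≤ x := hϱ0.trans hϱ
  unfold pIntegrand
  gcongr (1 + 2 * ?_) / ?_ * _ * (1 + 3 * ?_ + ?_)
  exact one_sub_le_pDenom hs hμ

lemma pIntegrand_le_pMajorant {R : ℝ} (hs : 0 < s) (hsR : s ≤ R) (hμ0 : 0 ≤ μ)
    (hμ : μ ≤ 4 * π / 3 * x * s ^ 3) (hϱ0 : 0 ≤ ϱ) (hϱ : ϱ ≤ x)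
    (hR : 8 * π / 3 * (1 + x) * R ^ 2 < 1) : pIntegrand s μ ϱ ≤ pMajorant x R s := by
  have hx : 0 ≤ x := hϱ0.trans hϱ
  have hsR2 : 8 * π / 3 * (1 + x) * s ^ 2 ≤ 8 * π / 3 * (1 + x) * R ^ 2 := by gcongr
  calc pIntegrand s μ ϱ
      ≤ (1 + 2 * x) / (1 - 8 * π / 3 * (1 + x) * s ^ 2) * (4 * π * s / 3) * (1 + 3 * x + x) :=
        pIntegrand_le hs hμ0 hμ hϱ0 hϱ (hsR2.trans_lt hR)
    _ = (1 + 2 * x) * (1 + 4 * x) * (4 * π * s / 3) *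
          (1 / (1 - 8 * π / 3 * (1 + x) * s ^ 2)) := by
        ring
    _ ≤ (1 + 2 * x) * (1 + 4 * x) * (4 * π * s / 3) *
          (1 + 8 * π / 3 * (1 + x) * s ^ 2 / (1 - 8 * π / 3 * (1 + x) * R ^ 2)) := by
        gcongr
        exact one_div_one_sub_le_one_add_div (by positivity) hsR2 hR
    _ = pMajorant x R s := by
        unfold pMajorant; ring

end pIntegrand

lemma integral_pMajorant (x R : ℝ) :
    ∫ s in (0:ℝ)..R, pMajorant x R s = (1 + 2 * x) * (1 + 4 * x) * (4 * π / 3) *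
      (R ^ 2 / 2 + 8 * π / 3 * (1 + x) * (R ^ 4 / 4) / (1 - 8 * π / 3 * (1 + x) * R ^ 2)) := by
  unfold pMajorant
  rw [intervalIntegral.integral_const_mul, intervalIntegral.integral_add, integral_id,
    intervalIntegral.integral_div, intervalIntegral.integral_const_mul, integral_pow]
  · ring
  all_goals exact Continuous.intervalIntegrable (by fun_prop) _ _

lemma integral_pMajorant_le {R : ℝ} (hx : rho0R R ≤ 1 / 2) :
    ∫ s in (0:ℝ)..R, pMajorant (rho0R R) R s ≤ rho0R R := by
  have hx0 := rho0R_nonneg R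
  have hR2 : R ^ 2 = 3 * rho0R R / (16 * π) := by unfold rho0R; field_simp
  rw [integral_pMajorant, one_sub_mul_sq_eq_rho0R]
  set x := rho0R R
  have hpos : 0 < 2 - x - x ^ 2 := by nlinarith
  have hpoly : (1 + 2 * x) * (1 + 4 * x) * (4 - x - x ^ 2) ≤ 16 * (2 - x - x ^ 2) := by
    nlinarith [mul_nonneg hx0 (sub_nonneg.2 hx), pow_nonneg hx0 3]
  have h : (1 + 2 * x) * (1 + 4 * x) * (4 * π / 3) *
      (R ^ 2 / 2 + 8 * π / 3 * (1 + x) * (R ^ 4 / 4) / ((2 - x - x ^ 2) / 2))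
      = x * ((1 + 2 * x) * (1 + 4 * x) * (4 - x - x ^ 2)) / (16 * (2 - x - x ^ 2)) := by
    rw [show R ^ 4 = (R ^ 2) ^ 2 by ring, hR2]
    field_simp
    ring
  rw [h, div_le_iff₀ (by positivity)]
  exact mul_le_mul_of_nonneg_left hpoly hx0

section Pop

variable {R : ℝ} {m ρ : ℝ → ℝ}

lemma pDenom_pos (hC : memC R m ρ) (hu : 8 * π / 3 * (1 + rho0R R) * R ^ 2 < 1) {s : ℝ}
    (hs : s ∈ Ioc 0 R) : 0 < pDenom s (m s) := by
  have hm := (hC.2.2 s (Ioc_subset_Icc_self hs)).2.1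
  have hsR : s ^ 2 ≤ R ^ 2 := pow_le_pow_left₀ hs.1.le hs.2 2
  calc 0 < 1 - 8 * π / 3 * (1 + rho0R R) * R ^ 2 := by linarith
    _ ≤ 1 - 8 * π / 3 * (1 + rho0R R) * s ^ 2 := by have := rho0R_nonneg R; gcongr
    _ ≤ _ := one_sub_le_pDenom hs.1 hm

lemma pIntegrand_mem_Icc (hC : memC R m ρ) (hu : 8 * π / 3 * (1 + rho0R R) * R ^ 2 < 1)
    {s : ℝ} (hs : s ∈ Icc 0 R) :
    pIntegrand s (m s) (ρ s) ∈ Icc 0 (pMajorant (rho0R R) R s) := by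
  obtain ⟨hm0, hm, hρ0, hρ⟩ := hC.2.2 s hs
  rcases hs.1.eq_or_lt with rfl | hs0
  · -- at `s = 0` the factor `4πs/3` vanishes, whatever the junk values of `μ / 0`
    simp [pIntegrand, pMajorant]
  · exact ⟨pIntegrand_nonneg hs0.le hm0 hρ0 (pDenom_pos hC hu ⟨hs0, hs.2⟩).le,
      pIntegrand_le_pMajorant hs0 hs.2 hm0 hm hρ0 hρ hu⟩

lemma continuousOn_pIntegrand (hC : memC R m ρ) (hu : 8 * π / 3 * (1 + rho0R R) * R ^ 2 < 1) :
    ContinuousOn (fun s => pIntegrand s (m s) (ρ s)) (Ioc 0 R) := by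
  have hm := hC.1.mono Ioc_subset_Icc_self
  have hρ := hC.2.1.mono Ioc_subset_Icc_self
  have hs : ∀ s ∈ Ioc (0:ℝ) R, s ≠ 0 := fun s hs => hs.1.ne'
  have hD : ∀ s ∈ Ioc (0:ℝ) R, pDenom s (m s) ≠ 0 := fun s hs => (pDenom_pos hC hu hs).ne'
  have hDc : ContinuousOn (fun s => pDenom s (m s)) (Ioc 0 R) := by
    unfold pDenom
    fun_prop (disch := assumption)
  unfold pIntegrand
  fun_prop (disch := first | assumption | simp_all)

lemma integrableOn_pIntegrand (hC : memC R m ρ) (hu : 8 * π / 3 * (1 + rho0R R) * R ^ 2 < 1) :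
    IntegrableOn (fun s => pIntegrand s (m s) (ρ s)) (Icc 0 R) := by
  refine integrableOn_Icc_of_continuousOn_Ioc_of_norm_le (C := pMajorant (rho0R R) R R)
    (continuousOn_pIntegrand hC hu) fun s hs => ?_
  obtain ⟨h0, h1⟩ := pIntegrand_mem_Icc hC hu (Ioc_subset_Icc_self hs)
  rw [Real.norm_of_nonneg h0]
  refine h1.trans ?_
  have := rho0R_nonneg R
  have : 0 < 1 - 8 * π / 3 * (1 + rho0R R) * R ^ 2 := by linarith
  unfold pMajorant
  gcongr
  all_goals first | exact hs.1.le | exact hs.2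

lemma continuousOn_Pop (hR : 0 ≤ R)
    (hint : IntegrableOn (fun s => pIntegrand s (m s) (ρ s)) (Icc 0 R)) :
    ContinuousOn (Pop R m ρ) (Icc 0 R) := by
  rw [← uIcc_of_le hR] at hint ⊢
  exact intervalIntegral.continuousOn_primitive_interval_left hint

lemma Pop_nonneg (hC : memC R m ρ) (hu : 8 * π / 3 * (1 + rho0R R) * R ^ 2 < 1) {r : ℝ}
    (hr : r ∈ Icc 0 R) : 0 ≤ Pop R m ρ r :=
  intervalIntegral.integral_nonneg hr.2 fun _ hs =>
    (pIntegrand_mem_Icc hC hu ⟨hr.1.trans hs.1, hs.2⟩).1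

lemma Pop_le_rho0R (hC : memC R m ρ) (hx : rho0R R ≤ 1 / 2) {r : ℝ} (hr : r ∈ Icc 0 R) :
    Pop R m ρ r ≤ rho0R R := by
  have hu := mul_sq_lt_one_of_rho0R_le hx
  have hR : 0 ≤ R := hr.1.trans hr.2
  have hint := (intervalIntegrable_iff_integrableOn_Icc_of_le hR).mpr
    (integrableOn_pIntegrand hC hu)
  calc Pop R m ρ r ≤ Pop R m ρ 0 := by
        refine intervalIntegral.integral_mono_interval hr.1 hr.2 le_rfl ?_ hint
        exact (ae_restrict_iff' measurableSet_Ioc).mpr (ae_of_all _ fun s hs =>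
          (pIntegrand_mem_Icc hC hu (Ioc_subset_Icc_self hs)).1)
    _ ≤ ∫ s in (0:ℝ)..R, pMajorant (rho0R R) R s :=
        intervalIntegral.integral_mono_on hR hint
          (Continuous.intervalIntegrable (by unfold pMajorant; fun_prop) _ _)
          fun s hs => (pIntegrand_mem_Icc hC hu hs).2
    _ ≤ rho0R R := integral_pMajorant_le hx

end Pop

theorem stmt1 :
    ∀ R : ℝ, 0 < R → R < 1 / 2 * Real.sqrt (3 / (8 * π)) →
      ∀ m ρ : ℝ → ℝ, memC R m ρ → memC R (Mop ρ) (Pop R m ρ) := by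
  intro R hR hRlt m ρ hC
  have hx : rho0R R ≤ 1 / 2 := (rho0R_lt_half hR hRlt).le
  have hu := mul_sq_lt_one_of_rho0R_le hx
  refine ⟨continuousOn_Mop hR.le hC.2.1,
    continuousOn_Pop hR.le (integrableOn_pIntegrand hC hu), fun r hr => ?_⟩
  have hsub : Icc 0 r ⊆ Icc 0 R := Icc_subset_Icc_right hr.2
  exact ⟨Mop_nonneg hr.1 fun s hs => (hC.2.2 s (hsub hs)).2.2.1,
    Mop_le hr.1 (hC.2.1.mono hsub) fun s hs => (hC.2.2 s (hsub hs)).2.2.2,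
    Pop_nonneg hC hu hr, Pop_le_rho0R hC hx hr⟩

end
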